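/- arXiv:0810.0591 — 6 statements merged into one kernel-verified Lean document; each statement's English description precedes it below -/
import Mathlib

section
/- Let k ≥ 1 be a natural number and set d = 4k+1. If σ₀ and σ₁ są permutations of a set with d elements such that the cycle types of σ₀ and of σ₁ each consist of exactly k cycles of length 4, the cycle type of σ₀σ₁ consists of exactly 2k cycles of length 2, and the subgroup generated by σ₀ and σ₁ acts transitively, then the subgroup generated by σ₀ and σ₁ has cardinality 4d. -/
/-- If `d = 4k+1` with `k ≥ 1` and `σ₀, σ₁` are permutations of a
`d`-element set with cycle types `(4,…,4)` (`k` fours) such that `σ₀σ₁` has cycle type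
`(2,…,2)` (`2k` twos) and `⟨σ₀, σ₁⟩` is transitive, then `⟨σ₀, σ₁⟩` has order `4d`. -/
theorem stmt1 (k : ℕ) (hk : 1 ≤ k)
    (σ₀ σ₁ : Equiv.Perm (Fin (4 * k + 1)))
    (h₀ : σ₀.cycleType = Multiset.replicate k 4)
    (h₁ : σ₁.cycleType = Multiset.replicate k 4)
    (h₂ : (σ₀ * σ₁).cycleType = Multiset.replicate (2 * k) 2)
    (htrans : MulAction.IsPretransitive (Subgroup.closure {σ₀, σ₁}) (Fin (4 * k + 1))) :
    Nat.card (Subgroup.closure {σ₀, σ₁}) = 4 * (4 * k + 1) := by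
  classical
  -- orders of the generators
  have hlcm : ∀ (σ : Equiv.Perm (Fin (4 * k + 1))) (n m : ℕ), n ≠ 0 →
      σ.cycleType = Multiset.replicate n m → orderOf σ = m := by
    intro σ n m hn h
    rw [← Equiv.Perm.lcm_cycleType, h]
    refine Nat.dvd_antisymm (Multiset.lcm_dvd.2 fun b hb => ?_) (Multiset.dvd_lcm ?_)
    · rw [Multiset.eq_of_mem_replicate hb]
    · exact Multiset.mem_replicate.2 ⟨hn, rfl⟩
  have ho0 : orderOf σ₀ = 4 := hlcm _ k 4 (by omega) h₀
  have ho1 : orderOf σ₁ = 4 := hlcm _ k 4 (by omega) h₁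
  have hot : orderOf (σ₀ * σ₁) = 2 := hlcm _ (2 * k) 2 (by omega) h₂
  have hpow0 : σ₀ ^ 4 = 1 := by have := pow_orderOf_eq_one σ₀; rwa [ho0] at this
  have hpow1 : σ₁ ^ 4 = 1 := by have := pow_orderOf_eq_one σ₁; rwa [ho1] at this
  have hpowt : (σ₀ * σ₁) ^ 2 = 1 := by have := pow_orderOf_eq_one (σ₀ * σ₁); rwa [hot] at this
  have h4s' : σ₀ * σ₀ * σ₀ * σ₀ = 1 := by rw [← hpow0]; simp [pow_succ, mul_assoc]
  have h4b' : σ₁ * σ₁ * σ₁ * σ₁ = 1 := by rw [← hpow1]; simp [pow_succ, mul_assoc]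
  have h2' : σ₀ * σ₁ * σ₀ * σ₁ = 1 := by rw [← hpowt]; simp [pow_succ, mul_assoc]
  have hsbs : σ₀ * σ₁ * σ₀ = σ₁⁻¹ := mul_eq_one_iff_eq_inv.mp h2'
  have hbsb : σ₁ * σ₀ * σ₁ = σ₀⁻¹ := by
    have h : σ₁ * σ₀ * σ₁ * σ₀ = 1 := by
      calc σ₁ * σ₀ * σ₁ * σ₀ = σ₁ * (σ₀ * σ₁ * σ₀ * σ₁) * σ₁⁻¹ := by group
      _ = 1 := by rw [h2']; group
    exact mul_eq_one_iff_eq_inv.mp h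
  -- the translation generators
  set w : Equiv.Perm (Fin (4 * k + 1)) := σ₁ * σ₀⁻¹ with hw
  set w' : Equiv.Perm (Fin (4 * k + 1)) := σ₀ * w * σ₀⁻¹ with hw'
  set A : Subgroup (Equiv.Perm (Fin (4 * k + 1))) := Subgroup.closure {w, w'} with hA
  set G : Subgroup (Equiv.Perm (Fin (4 * k + 1))) := Subgroup.closure {σ₀, σ₁} with hG
  -- conjugation identities
  have c1 : σ₀ * w * σ₀⁻¹ = w' := hw'.symm
  have c2 : σ₀ * w' * σ₀⁻¹ = w⁻¹ := by
    calc σ₀ * w' * σ₀⁻¹ = σ₀ * (σ₀ * (σ₁ * σ₀⁻¹) * σ₀⁻¹) * σ₀⁻¹ := by rw [hw', hw]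
    _ = σ₀ * (σ₀ * σ₁ * σ₀) * (σ₀ * σ₀ * σ₀ * σ₀)⁻¹ := by group
    _ = σ₀ * σ₁⁻¹ := by rw [hsbs, h4s']; group
    _ = w⁻¹ := by rw [hw]; group
  have c3 : σ₁ * w * σ₁⁻¹ = w' := by
    have e1 : σ₁ * w * σ₁⁻¹ = σ₁⁻¹ * σ₀ := by
      calc σ₁ * w * σ₁⁻¹ = σ₁ * σ₁ * σ₁ * (σ₁ * σ₀ * σ₁)⁻¹ := by rw [hw]; group
      _ = σ₁ * σ₁ * σ₁ * σ₀ := by rw [hbsb, inv_inv]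
      _ = (σ₁ * σ₁ * σ₁ * σ₁) * (σ₁⁻¹ * σ₀) := by group
      _ = σ₁⁻¹ * σ₀ := by rw [h4b']; group
    have e2 : w' = σ₁⁻¹ * σ₀ := by
      calc w' = σ₀ * (σ₁ * σ₀⁻¹) * σ₀⁻¹ := by rw [hw', hw]
      _ = (σ₀ * σ₁ * σ₀) * (σ₀ * σ₀ * σ₀ * σ₀)⁻¹ * σ₀ := by group
      _ = σ₁⁻¹ * σ₀ := by rw [hsbs, h4s']; group
    rw [e1, e2]
  have c4 : σ₁ * w' * σ₁⁻¹ = w⁻¹ := by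
    calc σ₁ * w' * σ₁⁻¹ = (σ₁ * σ₀ * σ₁) * (σ₀⁻¹ * σ₀⁻¹) * σ₁⁻¹ := by rw [hw', hw]; group
    _ = σ₀⁻¹ * (σ₀⁻¹ * σ₀⁻¹) * σ₁⁻¹ := by rw [hbsb]
    _ = (σ₀ * σ₀ * σ₀ * σ₀)⁻¹ * (σ₀ * σ₁⁻¹) := by group
    _ = w⁻¹ := by rw [h4s', hw]; group
  -- w and w' commute
  have hcomm : w * w' = w' * w := by
    have e1 : w * w' = σ₁ * σ₁ * (σ₀⁻¹ * σ₀⁻¹) := by rw [hw', hw]; group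
    have e2 : w' * w = σ₁⁻¹ * σ₁⁻¹ * (σ₀⁻¹ * σ₀⁻¹) := by
      calc w' * w = (σ₀ * (σ₁ * σ₀⁻¹) * σ₀⁻¹) * (σ₁ * σ₀⁻¹) := by rw [hw', hw]
      _ = (σ₀ * σ₁ * σ₀) * (σ₀ * σ₀ * σ₀ * σ₀)⁻¹ * (σ₀ * σ₁ * σ₀) * (σ₀ * σ₀)⁻¹ := by group
      _ = σ₁⁻¹ * σ₁⁻¹ * (σ₀⁻¹ * σ₀⁻¹) := by rw [hsbs, h4s']; group
    have e3 : σ₁ * σ₁ = σ₁⁻¹ * σ₁⁻¹ := by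
      calc σ₁ * σ₁ = (σ₁ * σ₁ * σ₁ * σ₁) * (σ₁⁻¹ * σ₁⁻¹) := by simp [mul_assoc]
      _ = σ₁⁻¹ * σ₁⁻¹ := by rw [h4b']; group
    rw [e1, e2, e3]
  have mem_w : w ∈ A := Subgroup.subset_closure (by simp)
  have mem_w' : w' ∈ A := Subgroup.subset_closure (by simp)
  -- A is closed under conjugation by σ₀ and σ₁
  have hconj0 : ∀ x ∈ A, σ₀ * x * σ₀⁻¹ ∈ A := by
    intro x hx
    induction hx using Subgroup.closure_induction with
    | mem y hy =>
      rcases hy with rfl | rfl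
      · rw [c1]; exact mem_w'
      · rw [c2]; exact inv_mem mem_w
    | one => simpa using one_mem A
    | mul x y hx hy ihx ihy =>
      have e : σ₀ * (x * y) * σ₀⁻¹ = (σ₀ * x * σ₀⁻¹) * (σ₀ * y * σ₀⁻¹) := by group
      rw [e]; exact mul_mem ihx ihy
    | inv x hx ihx =>
      have e : σ₀ * x⁻¹ * σ₀⁻¹ = (σ₀ * x * σ₀⁻¹)⁻¹ := by group
      rw [e]; exact inv_mem ihx
  have hconj1 : ∀ x ∈ A, σ₁ * x * σ₁⁻¹ ∈ A := by
    intro x hx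
    induction hx using Subgroup.closure_induction with
    | mem y hy =>
      rcases hy with rfl | rfl
      · rw [c3]; exact mem_w'
      · rw [c4]; exact inv_mem mem_w
    | one => simpa using one_mem A
    | mul x y hx hy ihx ihy =>
      have e : σ₁ * (x * y) * σ₁⁻¹ = (σ₁ * x * σ₁⁻¹) * (σ₁ * y * σ₁⁻¹) := by group
      rw [e]; exact mul_mem ihx ihy
    | inv x hx ihx =>
      have e : σ₁ * x⁻¹ * σ₁⁻¹ = (σ₁ * x * σ₁⁻¹)⁻¹ := by group
      rw [e]; exact inv_mem ihx
  -- conjugation by powers of σ₀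
  have hconjpow : ∀ (i : ℕ), ∀ x ∈ A, σ₀ ^ i * x * (σ₀ ^ i)⁻¹ ∈ A := by
    intro i
    induction i with
    | zero => intro x hx; simpa using hx
    | succ n ih =>
      intro x hx
      have e : σ₀ ^ (n + 1) * x * (σ₀ ^ (n + 1))⁻¹
          = σ₀ * (σ₀ ^ n * x * (σ₀ ^ n)⁻¹) * σ₀⁻¹ := by
        rw [pow_succ']; group
      rw [e]; exact hconj0 _ (ih x hx)
  -- inverse powers
  have hinvpow : ∀ i : ℕ, σ₀ ^ (3 * i + 4) = (σ₀ ^ i)⁻¹ := by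
    intro i
    refine eq_inv_of_mul_eq_one_left ?_
    rw [← pow_add]
    have e : 3 * i + 4 + i = 4 * (i + 1) := by ring
    rw [e, pow_mul, hpow0, one_pow]
  -- normal form: every element of G is x * σ₀ ^ i with x ∈ A
  have hform : ∀ g ∈ G, ∃ x ∈ A, ∃ i : ℕ, g = x * σ₀ ^ i := by
    intro g hg
    induction hg using Subgroup.closure_induction with
    | mem y hy =>
      rcases hy with rfl | rfl
      · exact ⟨1, one_mem A, 1, by simp⟩
      · exact ⟨w, mem_w, 1, by rw [hw]; simp⟩
    | one => exact ⟨1, one_mem A, 0, by simp⟩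
    | mul x y hx hy ihx ihy =>
      obtain ⟨a, ha, i, rfl⟩ := ihx
      obtain ⟨b, hb, j, rfl⟩ := ihy
      refine ⟨a * (σ₀ ^ i * b * (σ₀ ^ i)⁻¹), mul_mem ha (hconjpow i b hb), i + j, ?_⟩
      rw [pow_add]; group
    | inv x hx ihx =>
      obtain ⟨a, ha, i, rfl⟩ := ihx
      refine ⟨σ₀ ^ (3 * i + 4) * a⁻¹ * (σ₀ ^ (3 * i + 4))⁻¹,
        hconjpow _ _ (inv_mem ha), 3 * i + 4, ?_⟩
      rw [hinvpow i]; group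
  -- elements of A commute
  have hAcomm : ∀ x ∈ A, ∀ y ∈ A, Commute x y := by
    intro x hx y hy
    induction hx, hy using Subgroup.closure_induction₂ with
    | mem a b ha hb =>
      rcases ha with rfl | rfl <;> rcases hb with rfl | rfl
      · exact Commute.refl _
      · exact hcomm
      · exact hcomm.symm
      · exact Commute.refl _
    | one_left b hb => exact Commute.one_left _
    | one_right a ha => exact Commute.one_right _
    | mul_left a b c ha hb hc h1 h2 => exact h1.mul_left h2
    | mul_right a b c ha hb hc h1 h2 => exact h1.mul_right h2
    | inv_left a b ha hb h => exact h.inv_left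
    | inv_right a b ha hb h => exact h.inv_right
  -- the fixed point of σ₀
  have hsupp : σ₀.support.card = 4 * k := by
    rw [← Equiv.Perm.sum_cycleType, h₀, Multiset.sum_replicate, smul_eq_mul]
    omega
  obtain ⟨p₀, hp₀⟩ : ∃ p, σ₀ p = p := by
    by_contra h
    push_neg at h
    have huniv : σ₀.support = Finset.univ :=
      Finset.eq_univ_iff_forall.2 fun p => Equiv.Perm.mem_support.2 (h p)
    have := congrArg Finset.card huniv
    rw [hsupp, Finset.card_univ, Fintype.card_fin] at this
    omega
  have hfixpow : ∀ i : ℕ, (σ₀ ^ i) p₀ = p₀ := by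
    intro i
    induction i with
    | zero => simp
    | succ n ih => rw [pow_succ, Equiv.Perm.mul_apply, hp₀, ih]
  -- A acts transitively, pointed at p₀
  have hσ₀G : σ₀ ∈ G := Subgroup.subset_closure (by simp)
  have hσ₁G : σ₁ ∈ G := Subgroup.subset_closure (by simp)
  have htransA : ∀ q : Fin (4 * k + 1), ∃ x ∈ A, x p₀ = q := by
    intro q
    haveI := htrans
    obtain ⟨g, hgq⟩ := MulAction.exists_smul_eq G p₀ q
    obtain ⟨x, hx, i, he⟩ := hform (g : Equiv.Perm (Fin (4 * k + 1))) g.2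
    refine ⟨x, hx, ?_⟩
    have : (g : Equiv.Perm (Fin (4 * k + 1))) p₀ = q := hgq
    rw [he, Equiv.Perm.mul_apply, hfixpow i] at this
    exact this
  -- A acts regularly
  have hreg : ∀ x ∈ A, x p₀ = p₀ → x = 1 := by
    intro x hx hxp
    ext q
    obtain ⟨y, hy, rfl⟩ := htransA q
    have h2 : (x * y) p₀ = (y * x) p₀ := by rw [hAcomm x hx y hy]
    simp only [Equiv.Perm.mul_apply, hxp] at h2
    simp [h2]
  -- the stabilizer of p₀ in G is generated by σ₀
  have hstab : MulAction.stabilizer G p₀ = Subgroup.zpowers (⟨σ₀, hσ₀G⟩ : G) := by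
    apply le_antisymm
    · intro g hg
      have hgp : (g : Equiv.Perm (Fin (4 * k + 1))) p₀ = p₀ := hg
      obtain ⟨x, hx, i, he⟩ := hform (g : Equiv.Perm (Fin (4 * k + 1))) g.2
      have hxp : x p₀ = p₀ := by
        have : (x * σ₀ ^ i) p₀ = p₀ := by rw [← he]; exact hgp
        rwa [Equiv.Perm.mul_apply, hfixpow i] at this
      have hx1 : x = 1 := hreg x hx hxp
      have : (g : Equiv.Perm (Fin (4 * k + 1))) = σ₀ ^ i := by rw [he, hx1, one_mul]
      refine Subgroup.mem_zpowers_iff.mpr ⟨(i : ℤ), ?_⟩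
      apply Subtype.ext
      rw [SubgroupClass.coe_zpow]
      rw [zpow_natCast]
      exact this.symm
    · rw [Subgroup.zpowers_le]
      show (σ₀ : Equiv.Perm (Fin (4 * k + 1))) • p₀ = p₀
      exact hp₀
  -- orbit–stabilizer
  haveI := htrans
  have key := Nat.card_congr (MulAction.orbitProdStabilizerEquivGroup G p₀)
  rw [Nat.card_prod] at key
  have horb : Nat.card (MulAction.orbit G p₀) = 4 * k + 1 := by
    rw [MulAction.orbit_eq_univ]
    rw [Nat.card_congr (Equiv.Set.univ _)]
    simp
  have hstabcard : Nat.card (MulAction.stabilizer G p₀) = 4 := by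
    rw [hstab, Nat.card_zpowers, Subgroup.orderOf_mk, ho0]
  rw [horb, hstabcard] at key
  rw [← key]
  ring
end

section
/- Let G be a group generated by two elements α and β satisfying α⁴ = 1, β⁴ = 1, and (αβ)² = 1. Let c₀ and c₁ be the bijections of ℂ given by c₀(z) = i·z and c₁(z) = 1 + i·z, which are elements of the group Γ. Then there exists a surjective group homomorphism f : Γ → G with f(c₀) = α and f(c₁) = β. In other words, Γ is the universal group of type (4,4,2). -/
open Complex

/-- Every complex fourth root of unity is a Gaussian integer. -/
lemma exists_gaussian_of_pow_four_eq_one {u : ℂ} (hu : u ^ 4 = 1) :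
    ∃ g : GaussianInt, (g : ℂ) = u := by
  have h1 : (u ^ 2 - 1) * (u ^ 2 + 1) = 0 := by linear_combination hu
  rcases mul_eq_zero.mp h1 with h | h
  · have h2 : (u - 1) * (u + 1) = 0 := by linear_combination h
    rcases mul_eq_zero.mp h2 with h3 | h3
    · exact ⟨1, by rw [map_one, (sub_eq_zero.mp h3).symm]⟩
    · exact ⟨-1, by rw [map_neg, map_one, (eq_neg_of_add_eq_zero_left h3).symm]⟩
  · have h2 : (u - I) * (u + I) = 0 := by linear_combination h - Complex.I_sq
    rcases mul_eq_zero.mp h2 with h3 | h3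
    · refine ⟨⟨0, 1⟩, ?_⟩
      rw [sub_eq_zero.mp h3, GaussianInt.toComplex_def']
      simp
    · refine ⟨⟨0, -1⟩, ?_⟩
      rw [eq_neg_of_add_eq_zero_left h3, GaussianInt.toComplex_def']
      push_cast
      ring

/-- The group `Γ` of bijections of `ℂ` of the form `z ↦ u·z + λ` with `u⁴ = 1` and
`λ` in the image of the Gaussian integers, viewed as a subgroup of `Equiv.Perm ℂ`. -/
def GammaGroup : Subgroup (Equiv.Perm ℂ) where
  carrier := {e | ∃ u lam : ℂ, u ^ 4 = 1 ∧ (∃ g : GaussianInt, (g : ℂ) = lam) ∧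
    ∀ z : ℂ, e z = u * z + lam}
  one_mem' := ⟨1, 0, one_pow 4, ⟨0, map_zero _⟩, fun z => by simp⟩
  mul_mem' := by
    rintro f g ⟨u₁, lam₁, hu₁, ⟨g₁, hg₁⟩, hf⟩ ⟨u₂, lam₂, hu₂, ⟨g₂, hg₂⟩, hg⟩
    obtain ⟨gu₁, hgu₁⟩ := exists_gaussian_of_pow_four_eq_one hu₁
    refine ⟨u₁ * u₂, u₁ * lam₂ + lam₁, by rw [mul_pow, hu₁, hu₂, one_mul],
      ⟨gu₁ * g₂ + g₁, by rw [map_add, map_mul, hgu₁, hg₂, hg₁]⟩, fun z => ?_⟩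
    show f (g z) = _
    rw [hg, hf]
    ring
  inv_mem' := by
    rintro e ⟨u, lam, hu, ⟨g, hg⟩, he⟩
    obtain ⟨gu, hgu⟩ := exists_gaussian_of_pow_four_eq_one hu
    refine ⟨u ^ 3, -(u ^ 3 * lam), by rw [← pow_mul, mul_comm, pow_mul, hu, one_pow],
      ⟨-(gu ^ 3 * g), by rw [map_neg, map_mul, map_pow, hgu, hg]⟩, fun z => ?_⟩
    have key : e (u ^ 3 * z + -(u ^ 3 * lam)) = z := by
      rw [he]; linear_combination (z - lam) * hu
    have h2 : e (e⁻¹ z) = e (u ^ 3 * z + -(u ^ 3 * lam)) := by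
      rw [key]; exact Equiv.apply_symm_apply e z
    exact e.injective h2

/-- The rotation `c₀ : z ↦ i·z`. -/
noncomputable def c0 : Equiv.Perm ℂ := Equiv.mulLeft₀ I I_ne_zero

/-- The map `c₁ : z ↦ 1 + i·z`. -/
noncomputable def c1 : Equiv.Perm ℂ := (Equiv.mulLeft₀ I I_ne_zero).trans (Equiv.addLeft 1)

lemma c0_apply (z : ℂ) : c0 z = I * z := rfl

lemma c1_apply (z : ℂ) : c1 z = 1 + I * z := rfl

lemma c0_mem : c0 ∈ GammaGroup :=
  ⟨I, 0, Complex.I_pow_four, ⟨0, map_zero _⟩, fun z => by rw [c0_apply, add_zero]⟩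

lemma c1_mem : c1 ∈ GammaGroup :=
  ⟨I, 1, Complex.I_pow_four, ⟨1, map_one _⟩, fun z => by rw [c1_apply, add_comm]⟩

/-!
`Γ` is the image of the semidirect product `ℤ[i] ⋊ ℤ`, in which `1 : ℤ` acts by multiplication
by `i`, under `(λ, k) ↦ (z ↦ λ + iᵏ z)`; the kernel consists of the pairs `(0, k)` with `4 ∣ k`.
In `G`, the elements `s = βα⁻¹` and `t = αsα⁻¹`, the would-be images of the translations by `1`
and `i`, commute and satisfy `αtα⁻¹ = s⁻¹`. Hence `λ ↦ s ^ re λ * t ^ im λ` and `k ↦ αᵏ` define a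
homomorphism on the semidirect product; it kills the kernel because `α⁴ = 1`, so it descends to
`Γ`, and it is onto because `α` and `β` generate `G`.
-/

local notation "ℤ[i]" => GaussianInt

lemma c0_zpow_apply (k : ℤ) (z : ℂ) : (c0 ^ k) z = I ^ k * z := by
  have hc0 : c0 = MulAction.toPermHom ℂˣ ℂ (Units.mk0 I I_ne_zero) := rfl
  rw [hc0, ← map_zpow]
  simp [Units.smul_def]

namespace GaussianInt

def mulIAut : MulAut (Multiplicative ℤ[i]) where
  toFun g := .ofAdd (⟨0, 1⟩ * g.toAdd)
  invFun g := .ofAdd (⟨0, -1⟩ * g.toAdd)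
  left_inv g := by ext <;> simp
  right_inv g := by ext <;> simp
  map_mul' g h := by simp [mul_add]

lemma mulIAut_re (g : Multiplicative ℤ[i]) : (mulIAut g).toAdd.re = -g.toAdd.im := by
  simp [mulIAut]

lemma mulIAut_im (g : Multiplicative ℤ[i]) : (mulIAut g).toAdd.im = g.toAdd.re := by
  simp [mulIAut]

lemma toComplex_mulIAut (g : Multiplicative ℤ[i]) :
    ((mulIAut g).toAdd : ℂ) = I * g.toAdd := by
  simp [mulIAut, toComplex_def']

def translationPerm : Multiplicative ℤ[i] →* Equiv.Perm ℂ where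
  toFun g := Equiv.addLeft (g.toAdd : ℂ)
  map_one' := by ext; simp
  map_mul' g h := by ext; simp

section powHom

variable {H : Type*} [Group H] {x y : H}

def powHom (hxy : Commute x y) : Multiplicative ℤ[i] →* H where
  toFun g := x ^ g.toAdd.re * y ^ g.toAdd.im
  map_one' := by simp
  map_mul' g h := by
    simp only [toAdd_mul, Zsqrtd.re_add, Zsqrtd.im_add, zpow_add]
    exact (hxy.zpow_zpow _ _).mul_mul_mul_comm _ _

lemma powHom_apply (hxy : Commute x y) (g : Multiplicative ℤ[i]) :
    powHom hxy g = x ^ g.toAdd.re * y ^ g.toAdd.im := rfl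

lemma semiconjBy_powHom_mulIAut {a : H} (hxy : Commute x y) (hx : SemiconjBy a x y)
    (hy : SemiconjBy a y x⁻¹) (g : Multiplicative ℤ[i]) :
    SemiconjBy a (powHom hxy g) (powHom hxy (mulIAut g)) := by
  rw [powHom_apply, powHom_apply, mulIAut_re, mulIAut_im, zpow_neg, ← inv_zpow,
    (hxy.inv_left.zpow_zpow _ _).eq]
  exact (hx.zpow_right _).mul_right (hy.zpow_right _)

end powHom

abbrev AffineGroup := Multiplicative ℤ[i] ⋊[zpowersHom _ mulIAut] Multiplicative ℤ

namespace AffineGroup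

section lift

variable {H : Type*} [Group H] {T : Multiplicative ℤ[i] →* H} {a : H}

lemma semiconjBy_zpow (hT : ∀ g, SemiconjBy a (T g) (T (mulIAut g))) (k : ℤ)
    (g : Multiplicative ℤ[i]) : SemiconjBy (a ^ k) (T g) (T ((mulIAut ^ k) g)) := by
  induction k using Int.induction_on generalizing g with
  | zero => simp
  | succ n ih =>
    rw [zpow_add_one, zpow_add_one, MulAut.mul_apply]
    exact (ih _).mul_left (hT g)
  | pred n ih =>
    rw [zpow_sub_one, zpow_sub_one, MulAut.mul_apply]
    exact (ih _).mul_left (SemiconjBy.inv_symm_left_iff.mpr (by simpa using hT (mulIAut⁻¹ g)))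

variable (T a) in
def lift (hT : ∀ g, SemiconjBy a (T g) (T (mulIAut g))) : AffineGroup →* H :=
  SemidirectProduct.lift T (zpowersHom H a) fun k => by
    ext g
    exact eq_mul_inv_of_mul_eq (semiconjBy_zpow hT k.toAdd g).eq.symm

lemma lift_apply (hT : ∀ g, SemiconjBy a (T g) (T (mulIAut g))) (x : AffineGroup) :
    lift T a hT x = T x.left * a ^ x.right.toAdd := rfl

end lift

noncomputable def toPerm : AffineGroup →* Equiv.Perm ℂ :=
  lift translationPerm c0 fun g => Equiv.ext fun z => by
    simp [translationPerm, c0_apply, toComplex_mulIAut, mul_add]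

lemma toPerm_apply (x : AffineGroup) (z : ℂ) :
    toPerm x z = x.left.toAdd + I ^ x.right.toAdd * z := by
  simp [toPerm, lift_apply, translationPerm, c0_zpow_apply]

lemma toPerm_mem_gammaGroup (x : AffineGroup) : toPerm x ∈ GammaGroup :=
  ⟨I ^ x.right.toAdd, x.left.toAdd, by rw [← zpow_natCast, ← zpow_mul, mul_comm, zpow_mul]; simp,
    ⟨_, rfl⟩, fun z => by rw [toPerm_apply, add_comm]⟩

noncomputable def toGamma : AffineGroup →* GammaGroup :=
  toPerm.codRestrict GammaGroup toPerm_mem_gammaGroup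

lemma toGamma_apply (x : AffineGroup) (z : ℂ) :
    (toGamma x : Equiv.Perm ℂ) z = x.left.toAdd + I ^ x.right.toAdd * z :=
  toPerm_apply x z

lemma toGamma_eq_c0 : toGamma ⟨1, .ofAdd 1⟩ = ⟨c0, c0_mem⟩ :=
  Subtype.ext (Equiv.ext fun z => by simp [toGamma_apply, c0_apply])

lemma toGamma_eq_c1 : toGamma ⟨.ofAdd 1, .ofAdd 1⟩ = ⟨c1, c1_mem⟩ :=
  Subtype.ext (Equiv.ext fun z => by simp [toGamma_apply, c1_apply])

lemma toGamma_surjective : Function.Surjective toGamma := by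
  rintro ⟨e, u, _, hu, ⟨g, rfl⟩, he⟩
  obtain ⟨j, -, rfl⟩ := isPrimitiveRoot_I.eq_pow_of_pow_eq_one hu
  refine ⟨⟨.ofAdd g, .ofAdd (j : ℤ)⟩, Subtype.ext (Equiv.ext fun z => ?_)⟩
  rw [toGamma_apply, he, add_comm]
  simp

lemma eq_one_and_dvd_of_mem_ker_toGamma {x : AffineGroup} (hx : x ∈ toGamma.ker) :
    x.left = 1 ∧ (4 : ℤ) ∣ x.right.toAdd := by
  have hz (z : ℂ) : x.left.toAdd + I ^ x.right.toAdd * z = z := by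
    rw [← toGamma_apply, MonoidHom.mem_ker.mp hx]; rfl
  have hleft : (x.left.toAdd : ℂ) = 0 := by simpa using hz 0
  refine ⟨toComplex_eq_zero.mp hleft, (isPrimitiveRoot_I.zpow_eq_one_iff_dvd _).mp ?_⟩
  simpa [hleft] using hz 1

end AffineGroup

end GaussianInt

section relations

variable {G : Type*} [Group G] {α β : G}

lemma inv_mul_inv_eq_mul_self (hα : α ^ 4 = 1) : α⁻¹ * α⁻¹ = α * α := by
  rw [← mul_inv_rev, inv_eq_iff_mul_eq_one, ← hα]
  simp only [pow_succ, pow_zero, one_mul, mul_assoc]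

lemma mul_mul_self_eq_inv (hαβ : (α * β) ^ 2 = 1) : α * β * α = β⁻¹ :=
  eq_inv_of_mul_eq_one_left (by rw [← hαβ, sq, ← mul_assoc])

lemma commute_mul_inv_conj (hα : α ^ 4 = 1) (hβ : β ^ 4 = 1) (hαβ : (α * β) ^ 2 = 1) :
    Commute (β * α⁻¹) (α * β * α⁻¹ * α⁻¹) := by
  have hba : β⁻¹ * α⁻¹ = α * β := by rw [← mul_mul_self_eq_inv hαβ]; group
  calc β * α⁻¹ * (α * β * α⁻¹ * α⁻¹)
      = β * β * (α⁻¹ * α⁻¹) := by group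
    _ = β⁻¹ * (β⁻¹ * α⁻¹) * α⁻¹ := by rw [← inv_mul_inv_eq_mul_self hβ]; group
    _ = α * β * α * (α * β) * α⁻¹ := by rw [hba, mul_mul_self_eq_inv hαβ]
    _ = α * β * (α⁻¹ * α⁻¹) * (β * α⁻¹) := by rw [inv_mul_inv_eq_mul_self hα]; group
    _ = α * β * α⁻¹ * α⁻¹ * (β * α⁻¹) := by group

lemma semiconjBy_conj_mul_inv (hα : α ^ 4 = 1) (hαβ : (α * β) ^ 2 = 1) :
    SemiconjBy α (α * β * α⁻¹ * α⁻¹) (β * α⁻¹)⁻¹ :=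
  calc α * (α * β * α⁻¹ * α⁻¹)
      = α * α * β * (α⁻¹ * α⁻¹) := by group
    _ = α * (α * β * α) * α := by rw [inv_mul_inv_eq_mul_self hα]; group
    _ = (β * α⁻¹)⁻¹ * α := by rw [mul_mul_self_eq_inv hαβ]; group

end relations

open GaussianInt AffineGroup in
theorem exists_hom_gammaGroup {G : Type*} [Group G] {α β : G}
    (hα : α ^ 4 = 1) (hβ : β ^ 4 = 1) (hαβ : (α * β) ^ 2 = 1) :
    ∃ f : GammaGroup →* G, f ⟨c0, c0_mem⟩ = α ∧ f ⟨c1, c1_mem⟩ = β := by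
  have hst := commute_mul_inv_conj hα hβ hαβ
  let F := lift (powHom hst) α <| semiconjBy_powHom_mulIAut hst
    (by simp [SemiconjBy, mul_assoc]) (semiconjBy_conj_mul_inv hα hαβ)
  have hker : toGamma.ker ≤ F.ker := fun x hx => by
    obtain ⟨hleft, k, hk⟩ := eq_one_and_dvd_of_mem_ker_toGamma hx
    rw [MonoidHom.mem_ker, AffineGroup.lift_apply, hleft, hk, map_one, one_mul, zpow_mul,
      zpow_ofNat, hα, one_zpow]
  refine ⟨toGamma.liftOfSurjective toGamma_surjective ⟨F, hker⟩, ?_, ?_⟩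
  · rw [← toGamma_eq_c0, MonoidHom.liftOfRightInverse_comp_apply, AffineGroup.lift_apply]
    simp
  · rw [← toGamma_eq_c1, MonoidHom.liftOfRightInverse_comp_apply, AffineGroup.lift_apply,
      powHom_apply]
    simp

/-- `Γ` is the universal group of type `(4,4,2)`: for any group `G`
generated by `α, β` with `α⁴ = β⁴ = (αβ)² = 1` there is a surjective homomorphism
`Γ → G` sending `c₀ : z ↦ i·z` to `α` and `c₁ : z ↦ 1 + i·z` to `β`. -/
theorem stmt5 {G : Type*} [Group G] (α β : G)
    (hgen : Subgroup.closure {α, β} = ⊤)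
    (hα : α ^ 4 = 1) (hβ : β ^ 4 = 1) (hαβ : (α * β) ^ 2 = 1) :
    ∃ f : GammaGroup →* G, Function.Surjective f ∧
      f ⟨c0, c0_mem⟩ = α ∧ f ⟨c1, c1_mem⟩ = β := by
  obtain ⟨f, hf0, hf1⟩ := exists_hom_gammaGroup hα hβ hαβ
  refine ⟨f, ?_, hf0, hf1⟩
  rw [← MonoidHom.range_eq_top, eq_top_iff, ← hgen, Subgroup.closure_le]
  rintro _ (rfl | rfl)
  exacts [⟨_, hf0⟩, ⟨_, hf1⟩]
end

section
/- Let G be a group and let α, β ∈ G satisfy α⁴ = 1, β⁴ = 1, and (αβ)² = 1. Then the elements u = α³β and v = αβ³ commute: (α³β)·(αβ³) = (αβ³)·(α³β). -/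
/-- In any group, if `α⁴ = 1`, `β⁴ = 1`, and `(αβ)² = 1`, then the
elements `α³β` and `αβ³` commute. -/
theorem stmt6 {G : Type*} [Group G] (α β : G)
    (hα : α ^ 4 = 1) (hβ : β ^ 4 = 1) (hαβ : (α * β) ^ 2 = 1) :
    (α ^ 3 * β) * (α * β ^ 3) = (α * β ^ 3) * (α ^ 3 * β) := by
  have hba : β * α = α⁻¹ * β⁻¹ := by
    have : (α * β) * (α * β) = 1 := by rw [← sq]; exact hαβ
    have h := congrArg (fun x => α⁻¹ * x * β⁻¹) this
    simpa [mul_assoc] using h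
  have ha3 : α ^ 3 = α⁻¹ := by
    have : α * α ^ 3 = 1 := by rw [← pow_succ']; exact hα
    exact eq_inv_of_mul_eq_one_right (by rw [← this])
  have hb3 : β ^ 3 = β⁻¹ := by
    have : β * β ^ 3 = 1 := by rw [← pow_succ']; exact hβ
    exact eq_inv_of_mul_eq_one_right (by rw [← this])
  rw [ha3, hb3]
  -- LHS: α⁻¹ * β * α * β⁻¹ ; RHS: α * β⁻¹ * α⁻¹ * β
  calc α⁻¹ * β * (α * β⁻¹) = α⁻¹ * (β * α) * β⁻¹ := by group
    _ = α⁻¹ * (α⁻¹ * β⁻¹) * β⁻¹ := by rw [hba]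
    _ = α⁻¹ * α⁻¹ * (β⁻¹ * β⁻¹) := by group
    _ = α * (β⁻¹ * α⁻¹) * β := by
        have hab : β⁻¹ * α⁻¹ = α * β := by
          have h2 : (α * β) * (α * β) = 1 := by rw [← sq]; exact hαβ
          rw [← mul_inv_rev]; exact inv_eq_of_mul_eq_one_right h2
        rw [hab]
        -- goal: α⁻¹ * α⁻¹ * (β⁻¹ * β⁻¹) = α * (α * β) * β
        have hαinv : α⁻¹ * α⁻¹ = α * α := by
          have h4 : α * α * (α * α) = 1 := by rw [← hα]; simp [pow_succ, mul_assoc]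
          calc α⁻¹ * α⁻¹ = (α * α)⁻¹ := by group
            _ = α * α := by rw [inv_eq_of_mul_eq_one_right h4]
        have hβinv : β⁻¹ * β⁻¹ = β * β := by
          have h4 : β * β * (β * β) = 1 := by rw [← hβ]; simp [pow_succ, mul_assoc]
          calc β⁻¹ * β⁻¹ = (β * β)⁻¹ := by group
            _ = β * β := by rw [inv_eq_of_mul_eq_one_right h4]
        rw [hαinv, hβinv]; group
    _ = α * β⁻¹ * (α⁻¹ * β) := by group
end

section
/- Let G be a group generated by two elements α and β satisfying α⁴ = 1, β⁴ = 1, and (αβ)² = 1. Then the subgroup H generated by α³β and αβ³ is a normal abelian subgroup of G whose index divides 4. -/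
open Subgroup

private lemma conj_closure_mem' {G : Type*} [Group G] {S : Set G} (g : G)
    (h : ∀ s ∈ S, g * s * g⁻¹ ∈ Subgroup.closure S) :
    ∀ n ∈ Subgroup.closure S, g * n * g⁻¹ ∈ Subgroup.closure S := by
  intro n hn
  induction hn using Subgroup.closure_induction with
  | mem s hs => exact h s hs
  | one => simpa using one_mem _
  | mul x y hx hy ihx ihy =>
      have e : g * (x * y) * g⁻¹ = (g * x * g⁻¹) * (g * y * g⁻¹) := by group
      rw [e]; exact mul_mem ihx ihy
  | inv x hx ih =>
      have e : g * x⁻¹ * g⁻¹ = (g * x * g⁻¹)⁻¹ := by group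
      rw [e]; exact inv_mem ih

/-- If a group `G` is generated by elements `α, β` with `α⁴ = 1`,
`β⁴ = 1`, `(αβ)² = 1`, then the subgroup `H` generated by `α³β` and `αβ³` is a normal
abelian subgroup of `G` whose index divides `4`. -/
theorem stmt8 {G : Type*} [Group G] (α β : G)
    (hgen : Subgroup.closure {α, β} = ⊤)
    (hα : α ^ 4 = 1) (hβ : β ^ 4 = 1) (hαβ : (α * β) ^ 2 = 1) :
    (Subgroup.closure {α ^ 3 * β, α * β ^ 3}).Normal ∧
    (∀ x ∈ Subgroup.closure {α ^ 3 * β, α * β ^ 3},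
      ∀ y ∈ Subgroup.closure {α ^ 3 * β, α * β ^ 3}, x * y = y * x) ∧
    (Subgroup.closure {α ^ 3 * β, α * β ^ 3}).index ∣ 4 := by
  set H := Subgroup.closure {α ^ 3 * β, α * β ^ 3} with hH
  -- basic consequences of the relations
  have ha3 : α ^ 3 = α⁻¹ := by
    have h : α ^ 3 * α = 1 := by rw [← pow_succ]; exact hα
    exact eq_inv_of_mul_eq_one_left h
  have hb3 : β ^ 3 = β⁻¹ := by
    have h : β ^ 3 * β = 1 := by rw [← pow_succ]; exact hβ
    exact eq_inv_of_mul_eq_one_left h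
  have h4a : (α * α) * (α * α) = 1 := by
    have h := hα; rw [show (4 : ℕ) = 2 + 2 from rfl, pow_add, sq] at h; exact h
  have h4b : (β * β) * (β * β) = 1 := by
    have h := hβ; rw [show (4 : ℕ) = 2 + 2 from rfl, pow_add, sq] at h; exact h
  have hainv : α⁻¹ * α⁻¹ = α * α := by
    rw [← mul_inv_rev]; exact (eq_inv_of_mul_eq_one_left h4a).symm
  have hbinv : β⁻¹ * β⁻¹ = β * β := by
    rw [← mul_inv_rev]; exact (eq_inv_of_mul_eq_one_left h4b).symm
  have h2 : α * β * (α * β) = 1 := by rw [← sq]; exact hαβ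
  have hr : β * α = α⁻¹ * β⁻¹ := by
    calc β * α = α⁻¹ * (α * β * (α * β)) * β⁻¹ := by group
      _ = α⁻¹ * β⁻¹ := by rw [h2]; group
  have hr2 : α * β = β⁻¹ * α⁻¹ := by
    rw [← mul_inv_rev]; exact eq_inv_of_mul_eq_one_left h2
  -- conjugation facts
  have c1 : α * (α ^ 3 * β) * α⁻¹ = (α * β ^ 3)⁻¹ := by rw [ha3, hb3]; group
  have c2 : α * (α * β ^ 3) * α⁻¹ = α ^ 3 * β := by
    rw [hb3, ha3]
    calc α * (α * β⁻¹) * α⁻¹ = α * α * (β⁻¹ * α⁻¹) := by group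
      _ = α * α * (α * β) := by rw [← hr2]
      _ = (α⁻¹ * α⁻¹) * (α * β) := by rw [hainv]
      _ = α⁻¹ * β := by group
  have c3 : β * (α ^ 3 * β) * β⁻¹ = (α * β ^ 3)⁻¹ := by rw [ha3, hb3]; group
  have c4 : β * (α * β ^ 3) * β⁻¹ = α ^ 3 * β := by
    rw [hb3, ha3]
    calc β * (α * β⁻¹) * β⁻¹ = (β * α) * (β⁻¹ * β⁻¹) := by group
      _ = (α⁻¹ * β⁻¹) * (β⁻¹ * β⁻¹) := by rw [hr]
      _ = (α⁻¹ * β⁻¹) * (β * β) := by rw [hbinv]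
      _ = α⁻¹ * β := by group
  have d1 : α⁻¹ * (α ^ 3 * β) * α⁻¹⁻¹ = α * β ^ 3 := by rw [← c2]; group
  have d2 : α⁻¹ * (α * β ^ 3) * α⁻¹⁻¹ = (α ^ 3 * β)⁻¹ := by
    rw [← inv_inv (α * β ^ 3), ← c1]; group
  have d3 : β⁻¹ * (α ^ 3 * β) * β⁻¹⁻¹ = α * β ^ 3 := by rw [← c4]; group
  have d4 : β⁻¹ * (α * β ^ 3) * β⁻¹⁻¹ = (α ^ 3 * β)⁻¹ := by
    rw [← inv_inv (α * β ^ 3), ← c3]; group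
  have hxm : α ^ 3 * β ∈ H := subset_closure (Set.mem_insert _ _)
  have hym : α * β ^ 3 ∈ H := subset_closure (Set.mem_insert_of_mem _ rfl)
  -- normality
  have key : ∀ g ∈ Subgroup.closure {α, β},
      (∀ n ∈ H, g * n * g⁻¹ ∈ H) ∧ (∀ n ∈ H, g⁻¹ * n * g⁻¹⁻¹ ∈ H) := by
    intro g hg
    induction hg using Subgroup.closure_induction with
    | mem s hs =>
        rcases hs with rfl | rfl
        · constructor
          · refine conj_closure_mem' _ ?_
            rintro s (rfl | rfl)
            · rw [c1]; exact inv_mem hym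
            · rw [c2]; exact hxm
          · refine conj_closure_mem' _ ?_
            rintro s (rfl | rfl)
            · rw [d1]; exact hym
            · rw [d2]; exact inv_mem hxm
        · constructor
          · refine conj_closure_mem' _ ?_
            rintro s (rfl | rfl)
            · rw [c3]; exact inv_mem hym
            · rw [c4]; exact hxm
          · refine conj_closure_mem' _ ?_
            rintro s (rfl | rfl)
            · rw [d3]; exact hym
            · rw [d4]; exact inv_mem hxm
    | one => constructor <;> intro n hn <;> simpa using hn
    | mul g h _ _ ihg ihh =>
        constructor
        · intro n hn
          have e : (g * h) * n * (g * h)⁻¹ = g * (h * n * h⁻¹) * g⁻¹ := by group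
          rw [e]; exact ihg.1 _ (ihh.1 _ hn)
        · intro n hn
          have e : (g * h)⁻¹ * n * ((g * h)⁻¹)⁻¹ = h⁻¹ * (g⁻¹ * n * g⁻¹⁻¹) * h⁻¹⁻¹ := by group
          rw [e]; exact ihh.2 _ (ihg.2 _ hn)
    | inv g _ ih =>
        refine ⟨ih.2, ?_⟩
        intro n hn
        have e : g⁻¹⁻¹ * n * g⁻¹⁻¹⁻¹ = g * n * g⁻¹ := by group
        rw [e]; exact ih.1 _ hn
  have hnormal : H.Normal := by
    refine ⟨fun n hn g => ?_⟩
    exact (key g (by rw [hgen]; trivial)).1 n hn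
  refine ⟨hnormal, ?_, ?_⟩
  · -- commutativity
    have hc : (α ^ 3 * β) * (α * β ^ 3) = (α * β ^ 3) * (α ^ 3 * β) := by
      rw [ha3, hb3]
      calc (α⁻¹ * β) * (α * β⁻¹) = α⁻¹ * (β * α) * β⁻¹ := by group
        _ = α⁻¹ * (α⁻¹ * β⁻¹) * β⁻¹ := by rw [hr]
        _ = (α⁻¹ * α⁻¹) * (β⁻¹ * β⁻¹) := by group
        _ = (α * α) * (β * β) := by rw [hainv, hbinv]
        _ = α * (α * β) * β := by group
        _ = α * (β⁻¹ * α⁻¹) * β := by rw [hr2]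
        _ = (α * β⁻¹) * (α⁻¹ * β) := by group
    intro x hx y hy
    induction hx, hy using Subgroup.closure_induction₂ with
    | mem a b ha hb =>
        rcases ha with rfl | rfl <;> rcases hb with rfl | rfl
        · rfl
        · exact hc
        · exact hc.symm
        · rfl
    | one_left x hx => simp
    | one_right x hx => simp
    | mul_left x y z hx hy hz h1 h2 => rw [mul_assoc, h2, ← mul_assoc, h1, mul_assoc]
    | mul_right y z x hy hz hx h1 h2 => rw [← mul_assoc, h1, mul_assoc, h2, ← mul_assoc]
    | inv_left x y hx hy h =>
        exact (Commute.inv_left h).eq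
    | inv_right x y hx hy h =>
        exact (Commute.inv_right h).eq
  · -- index divides 4
    haveI := hnormal
    set q := QuotientGroup.mk' H with hq
    have hqa4 : (q α) ^ 4 = 1 := by rw [← map_pow, hα, map_one]
    have hqx : q (α ^ 3 * β) = 1 := (QuotientGroup.eq_one_iff _).mpr hxm
    have hqβ : q β = q α := by
      have h1 : (q α) ^ 3 * q β = 1 := by rw [← map_pow, ← map_mul]; exact hqx
      have h2 : q β = ((q α) ^ 3)⁻¹ := eq_inv_of_mul_eq_one_left ?_
      · rw [h2]
        have h3 : q α * (q α) ^ 3 = 1 := by rw [← pow_succ']; exact hqa4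
        exact (eq_inv_of_mul_eq_one_left h3).symm
      · calc q β * (q α) ^ 3 = ((q α)^3)⁻¹ * ((q α) ^ 3 * q β) * (q α) ^ 3 := by group
          _ = 1 := by rw [h1]; group
    have htop : Subgroup.closure {q α} = ⊤ := by
      have hmap : (Subgroup.closure {α, β}).map q = Subgroup.closure (q '' {α, β}) :=
        MonoidHom.map_closure q _
      rw [hgen, Subgroup.map_top_of_surjective q (QuotientGroup.mk'_surjective H)] at hmap
      rw [Set.image_insert_eq, Set.image_singleton, hqβ, Set.pair_eq_singleton] at hmap
      exact hmap.symm
    have hzp : (⊤ : Subgroup (G ⧸ H)) = Subgroup.zpowers (q α) := by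
      rw [← htop, Subgroup.zpowers_eq_closure]
    have hcard : H.index = orderOf (q α) := by
      calc H.index = Nat.card (G ⧸ H) := rfl
        _ = Nat.card (⊤ : Subgroup (G ⧸ H)) := Subgroup.card_top.symm
        _ = Nat.card (Subgroup.zpowers (q α)) := by rw [hzp]
        _ = orderOf (q α) := Nat.card_zpowers _
    rw [hcard]
    exact orderOf_dvd_of_pow_eq_one hqa4
end

section
/- Let p be a prime with p ≡ 1 (mod 4) and let ℓ be a unit of ℤ/pℤ of multiplicative order 4. Define permutations of ℤ/pℤ by σ₀(x) = ℓ·x and σ₁(x) = ℓ·(x+1) − 1, and set σ∞ = σ₀ ∘ σ₁. Then: the cycle types of σ₀ and of σ₁ each consist of exactly (p−1)/4 cycles of length 4; the cycle type of σ∞ consists of exactly (p−1)/2 cycles of length 2; and the subgroup generated by σ₀ and σ₁ acts transitively on ℤ/pℤ. -/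
lemma auxRep {α : Type*} [Fintype α] [DecidableEq α] (σ : Equiv.Perm α) (k : ℕ) (hk : k ≠ 0)
    (h : ∀ n ∈ σ.cycleType, n = k) :
    σ.cycleType = Multiset.replicate (σ.support.card / k) k := by
  have h1 : σ.cycleType = Multiset.replicate (Multiset.card σ.cycleType) k :=
    Multiset.eq_replicate_card.mpr h
  have h2 := σ.sum_cycleType
  rw [h1, Multiset.sum_replicate, smul_eq_mul] at h2
  rw [h1, ← h2, Nat.mul_div_cancel _ (Nat.pos_of_ne_zero hk)]

lemma auxTwo {α : Type*} [Fintype α] [DecidableEq α] (σ : Equiv.Perm α)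
    (h : 2 ∈ σ.cycleType) : ∃ x, σ (σ x) = x ∧ σ x ≠ x := by
  rw [Equiv.Perm.cycleType_def, Multiset.mem_map] at h
  obtain ⟨c, hc, h2⟩ := h
  rw [← Finset.mem_def] at hc
  obtain ⟨hcyc, hsupp⟩ := Equiv.Perm.mem_cycleFactorsFinset_iff.mp hc
  have hord : orderOf c = 2 := by rw [hcyc.orderOf]; exact h2
  have hc2 : c ^ 2 = 1 := by rw [← hord]; exact pow_orderOf_eq_one c
  have hne : c.support.Nonempty := by
    rw [← Finset.card_pos]
    simp only [Function.comp_apply] at h2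
    omega
  obtain ⟨x, hx⟩ := hne
  have hx1 : c x ∈ c.support := Equiv.Perm.apply_mem_support.mpr hx
  refine ⟨x, ?_, ?_⟩
  · rw [← hsupp x hx, ← hsupp _ hx1]
    have : (c ^ 2) x = x := by rw [hc2]; rfl
    simpa [pow_succ, Equiv.Perm.mul_apply] using this
  · rw [← hsupp x hx]
    exact Equiv.Perm.mem_support.mp hx

/-- Let `p ≡ 1 (mod 4)` be prime and `ℓ` a unit of `ℤ/pℤ` of order `4`.
With `σ₀(x) = ℓ·x`, `σ₁(x) = ℓ·(x+1) − 1` and `σ∞ = σ₀ ∘ σ₁`, the cycle types of `σ₀` and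
`σ₁` consist of `(p−1)/4` cycles of length `4`, the cycle type of `σ∞` consists of
`(p−1)/2` cycles of length `2`, and `⟨σ₀, σ₁⟩` acts transitively on `ℤ/pℤ`. -/
theorem stmt15 (p : ℕ) [Fact p.Prime] (hp : p % 4 = 1)
    (ℓ : (ZMod p)ˣ) (hℓ : orderOf ℓ = 4)
    (σ₀ σ₁ : Equiv.Perm (ZMod p))
    (hσ₀ : ∀ x, σ₀ x = (ℓ : ZMod p) * x)
    (hσ₁ : ∀ x, σ₁ x = (ℓ : ZMod p) * (x + 1) - 1) :
    σ₀.cycleType = Multiset.replicate ((p - 1) / 4) 4 ∧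
    σ₁.cycleType = Multiset.replicate ((p - 1) / 4) 4 ∧
    (σ₀ * σ₁).cycleType = Multiset.replicate ((p - 1) / 2) 2 ∧
    MulAction.IsPretransitive (Subgroup.closure {σ₀, σ₁}) (ZMod p) := by
  have hprime : p.Prime := Fact.out
  have hp2 : p ≠ 2 := by intro h; omega
  have h2 : (2 : ZMod p) ≠ 0 := by
    intro h
    have : ((2 : ℕ) : ZMod p) = 0 := by push_cast; exact h
    rw [ZMod.natCast_eq_zero_iff] at this
    exact hp2 ((Nat.prime_dvd_prime_iff_eq hprime Nat.prime_two).mp this)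
  -- basic facts about ℓ
  have hℓ4 : (ℓ : ZMod p) ^ 4 = 1 := by
    have := pow_orderOf_eq_one ℓ
    rw [hℓ] at this
    have h' := congrArg Units.val this
    push_cast at h'
    exact h'
  have hℓ2u : ℓ ^ 2 ≠ 1 := by
    intro h
    have := orderOf_dvd_of_pow_eq_one h
    rw [hℓ] at this; norm_num at this
  have hℓ2 : (ℓ : ZMod p) ^ 2 = -1 := by
    have h0 : ((ℓ : ZMod p) ^ 2 - 1) * ((ℓ : ZMod p) ^ 2 + 1) = 0 := by
      linear_combination hℓ4
    rcases mul_eq_zero.mp h0 with h | h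
    · exact absurd (Units.ext (by push_cast; exact sub_eq_zero.mp h)) hℓ2u
    · exact eq_neg_of_add_eq_zero_left h
  have hℓ1 : (ℓ : ZMod p) ≠ 1 := by
    intro h
    have : ℓ = 1 := Units.ext (by push_cast; exact h)
    rw [this] at hℓ; simp at hℓ
  -- σ₀ facts
  have h04 : σ₀ ^ 4 = 1 := by
    ext x
    have : (σ₀ ^ 4) x = σ₀ (σ₀ (σ₀ (σ₀ x))) := by
      rw [show (4:ℕ) = 3+1 from rfl, pow_succ, Equiv.Perm.mul_apply,
        show (3:ℕ) = 2+1 from rfl, pow_succ, Equiv.Perm.mul_apply,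
        show (2:ℕ) = 1+1 from rfl, pow_succ, Equiv.Perm.mul_apply, pow_one]
    rw [this, hσ₀, hσ₀, hσ₀, hσ₀, Equiv.Perm.one_apply]
    linear_combination x * hℓ4
  have hmem0 : ∀ n ∈ σ₀.cycleType, n = 4 := by
    intro n hn
    have hdvd : n ∣ 4 :=
      (Equiv.Perm.dvd_of_mem_cycleType hn).trans (orderOf_dvd_of_pow_eq_one h04)
    have h2n := Equiv.Perm.two_le_of_mem_cycleType hn
    have h4n : n ≤ 4 := Nat.le_of_dvd (by norm_num) hdvd
    interval_cases n
    · exfalso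
      obtain ⟨x, hx2, hx1⟩ := auxTwo σ₀ hn
      rw [hσ₀, hσ₀] at hx2
      have hxx : (2 : ZMod p) * x = 0 := by linear_combination x * hℓ2 - hx2
      rcases mul_eq_zero.mp hxx with h | h
      · exact h2 h
      · apply hx1; rw [h, hσ₀, mul_zero]
    · exfalso; norm_num at hdvd
    · rfl
  have hsupp0 : σ₀.support = {(0 : ZMod p)}ᶜ := by
    ext x
    simp only [Equiv.Perm.mem_support, Finset.mem_compl, Finset.mem_singleton, hσ₀]
    constructor
    · intro h hx; apply h; rw [hx, mul_zero]
    · intro hx h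
      apply hx
      have : ((ℓ : ZMod p) - 1) * x = 0 := by linear_combination h
      rcases mul_eq_zero.mp this with h' | h'
      · exact absurd (sub_eq_zero.mp h') hℓ1
      · exact h'
  have hcard0 : σ₀.support.card = p - 1 := by
    rw [hsupp0, Finset.card_compl, Finset.card_singleton, ZMod.card]
  have hct0 : σ₀.cycleType = Multiset.replicate ((p - 1) / 4) 4 := by
    rw [auxRep σ₀ 4 (by norm_num) hmem0, hcard0]
  -- σ₁ is conjugate to σ₀
  have hct1 : σ₁.cycleType = Multiset.replicate ((p - 1) / 4) 4 := by
    have hconj : σ₁ = (Equiv.addRight (1 : ZMod p))⁻¹ * σ₀ *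
        ((Equiv.addRight (1 : ZMod p))⁻¹)⁻¹ := by
      rw [inv_inv]
      ext x
      simp only [Equiv.Perm.mul_apply, hσ₁, hσ₀]
      simp [Equiv.Perm.inv_def, sub_eq_add_neg]
    rw [hconj, Equiv.Perm.cycleType_conj, hct0]
  -- σ∞ = σ₀ * σ₁
  have hσi : ∀ x, (σ₀ * σ₁) x = -x - 1 - (ℓ : ZMod p) := by
    intro x
    rw [Equiv.Perm.mul_apply, hσ₁, hσ₀]
    linear_combination (x + 1) * hℓ2
  have hi2 : (σ₀ * σ₁) ^ 2 = 1 := by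
    ext x
    rw [show (2:ℕ) = 1+1 from rfl, pow_succ, Equiv.Perm.mul_apply, pow_one,
      hσi, hσi, Equiv.Perm.one_apply]
    ring
  have hmemi : ∀ n ∈ (σ₀ * σ₁).cycleType, n = 2 := by
    intro n hn
    have hdvd : n ∣ 2 :=
      (Equiv.Perm.dvd_of_mem_cycleType hn).trans (orderOf_dvd_of_pow_eq_one hi2)
    have h2n := Equiv.Perm.two_le_of_mem_cycleType hn
    have := Nat.le_of_dvd (by norm_num) hdvd
    omega
  have hsuppi : (σ₀ * σ₁).support = {(-1 - (ℓ : ZMod p)) * (2 : ZMod p)⁻¹}ᶜ := by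
    ext x
    simp only [Equiv.Perm.mem_support, Finset.mem_compl, Finset.mem_singleton, hσi]
    have h2i : (2 : ZMod p) * (2 : ZMod p)⁻¹ = 1 := mul_inv_cancel₀ h2
    constructor
    · intro h hx
      apply h
      rw [hx]
      linear_combination ((ℓ : ZMod p) + 1) * h2i
    · intro hx h
      apply hx
      have h2x : (2 : ZMod p) * x = -1 - (ℓ : ZMod p) := by linear_combination -h
      linear_combination (2:ZMod p)⁻¹ * h2x - x * h2i
  have hcardi : (σ₀ * σ₁).support.card = p - 1 := by
    rw [hsuppi, Finset.card_compl, Finset.card_singleton, ZMod.card]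
  have hcti : (σ₀ * σ₁).cycleType = Multiset.replicate ((p - 1) / 2) 2 := by
    rw [auxRep _ 2 (by norm_num) hmemi, hcardi]
  -- transitivity
  refine ⟨hct0, hct1, hcti, ?_⟩
  have hinv0 : ∀ x, σ₀⁻¹ x = ((ℓ⁻¹ : (ZMod p)ˣ) : ZMod p) * x := by
    intro x
    rw [Equiv.Perm.inv_eq_iff_eq, hσ₀, ← mul_assoc, ← Units.val_mul, mul_inv_cancel,
      Units.val_one, one_mul]
  set τ : Equiv.Perm (ZMod p) := σ₁ * σ₀⁻¹ with hτdef
  have hτ : ∀ x, τ x = x + ((ℓ : ZMod p) - 1) := by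
    intro x
    rw [hτdef, Equiv.Perm.mul_apply, hinv0, hσ₁]
    have hu : (ℓ : ZMod p) * ((ℓ⁻¹ : (ZMod p)ˣ) : ZMod p) = 1 := by
      rw [← Units.val_mul, mul_inv_cancel, Units.val_one]
    linear_combination x * hu
  have hτn : ∀ (n : ℕ) (x : ZMod p), (τ ^ n) x = x + n * ((ℓ : ZMod p) - 1) := by
    intro n
    induction n with
    | zero => intro x; simp
    | succ n ih =>
      intro x
      rw [pow_succ, Equiv.Perm.mul_apply, ih (τ x), hτ]
      push_cast
      ring
  have hτmem : τ ∈ Subgroup.closure {σ₀, σ₁} := by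
    apply mul_mem
    · exact Subgroup.subset_closure (by simp)
    · exact inv_mem (Subgroup.subset_closure (by simp))
  have hd : (ℓ : ZMod p) - 1 ≠ 0 := fun h => hℓ1 (sub_eq_zero.mp h)
  constructor
  intro x y
  set c : ZMod p := (y - x) * ((ℓ : ZMod p) - 1)⁻¹ with hc
  refine ⟨⟨τ ^ c.val, pow_mem hτmem _⟩, ?_⟩
  show (τ ^ c.val) x = y
  rw [hτn, ZMod.natCast_val, ZMod.cast_id, hc]
  have hdi : ((ℓ : ZMod p) - 1) * ((ℓ : ZMod p) - 1)⁻¹ = 1 := mul_inv_cancel₀ hd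
  linear_combination (y - x) * hdi
end

section
/- Let p be a prime with p ≡ 1 (mod 4) and let ℓ be a unit of ℤ/pℤ of multiplicative order 4. Define permutations of ℤ/pℤ by σ₀(x) = ℓ·x and σ₁(x) = ℓ·(x+1) − 1. Then the commutator σ₀⁻¹ ∘ σ₁⁻¹ ∘ σ₀ ∘ σ₁ is a nontrivial translation, i.e., equal to the map x ↦ x + c for some c ∈ ℤ/pℤ with c ≠ 0. -/
/-! Both maps are affine with the same linear part `x ↦ ℓ x`, so their commutator has linear part
`1`, i.e. it is a translation; its translation part works out to `(1 - ℓ⁻¹)²`, which vanishes only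
when `ℓ = 1`, excluded by `ℓ` having order `4`. -/

namespace Equiv.Perm

variable {K : Type*} [Field K]

theorem inv_apply_of_forall_apply_eq_mul_add {σ : Perm K} {a b : K} (ha : a ≠ 0)
    (hσ : ∀ x, σ x = a * x + b) (y : K) : σ⁻¹ y = a⁻¹ * (y - b) := by
  rw [inv_eq_iff_eq, hσ, mul_inv_cancel_left₀ ha, sub_add_cancel]

theorem commutator_apply_of_forall_apply_eq_mul_add {σ₀ σ₁ : Perm K} {a b₀ b₁ : K} (ha : a ≠ 0)
    (hσ₀ : ∀ x, σ₀ x = a * x + b₀) (hσ₁ : ∀ x, σ₁ x = a * x + b₁) (x : K) :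
    (σ₀⁻¹ * σ₁⁻¹ * σ₀ * σ₁) x = x + (b₁ - b₀) * a⁻¹ * (1 - a⁻¹) := by
  simp only [mul_apply, inv_apply_of_forall_apply_eq_mul_add ha hσ₀,
    inv_apply_of_forall_apply_eq_mul_add ha hσ₁, hσ₀, hσ₁]
  field_simp
  ring

end Equiv.Perm

theorem stmt16_general (p : ℕ) [Fact p.Prime]
    (ℓ : (ZMod p)ˣ) (hℓ : orderOf ℓ = 4)
    (σ₀ σ₁ : Equiv.Perm (ZMod p))
    (hσ₀ : ∀ x, σ₀ x = (ℓ : ZMod p) * x)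
    (hσ₁ : ∀ x, σ₁ x = (ℓ : ZMod p) * (x + 1) - 1) :
    ∃ c : ZMod p, c ≠ 0 ∧ ∀ x, (σ₀⁻¹ * σ₁⁻¹ * σ₀ * σ₁) x = x + c := by
  have hℓ₀ : (ℓ : ZMod p) ≠ 0 := ℓ.ne_zero
  have hℓ₁ : (ℓ : ZMod p) ≠ 1 := by
    intro h
    rw [Units.val_eq_one.mp h, orderOf_one] at hℓ
    omega
  have hσ₀' (x : ZMod p) : σ₀ x = ℓ * x + 0 := by rw [hσ₀, add_zero]
  have hσ₁' (x : ZMod p) : σ₁ x = ℓ * x + (ℓ - 1) := by rw [hσ₁]; ring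
  refine ⟨_, ?_, Equiv.Perm.commutator_apply_of_forall_apply_eq_mul_add hℓ₀ hσ₀' hσ₁'⟩
  rw [sub_zero]
  exact mul_ne_zero (mul_ne_zero (sub_ne_zero.mpr hℓ₁) (inv_ne_zero hℓ₀))
    (sub_ne_zero.mpr (inv_ne_one.mpr hℓ₁).symm)

/-- Let `p ≡ 1 (mod 4)` be prime and `ℓ` a unit of `ℤ/pℤ` of order `4`.
With `σ₀(x) = ℓ·x` and `σ₁(x) = ℓ·(x+1) − 1`, the commutator `σ₀⁻¹ ∘ σ₁⁻¹ ∘ σ₀ ∘ σ₁`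
is a nontrivial translation `x ↦ x + c`, `c ≠ 0`. -/
theorem stmt16 (p : ℕ) [Fact p.Prime] (hp : p % 4 = 1)
    (ℓ : (ZMod p)ˣ) (hℓ : orderOf ℓ = 4)
    (σ₀ σ₁ : Equiv.Perm (ZMod p))
    (hσ₀ : ∀ x, σ₀ x = (ℓ : ZMod p) * x)
    (hσ₁ : ∀ x, σ₁ x = (ℓ : ZMod p) * (x + 1) - 1) :
    ∃ c : ZMod p, c ≠ 0 ∧ ∀ x, (σ₀⁻¹ * σ₁⁻¹ * σ₀ * σ₁) x = x + c :=
  stmt16_general p ℓ hℓ σ₀ σ₁ hσ₀ hσ₁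
end
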